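/- Let f : ℝⁿ → (−∞,+∞] be lsc, convex, and absolutely symmetric, let X ∈ M_{m,n} with (f∘σ)(X) finite and ∂f(σ(X)) ≠ ∅. Then for every H ∈ M_{m,n}, the subderivative chain rule d(f∘σ)(X)(H) = df(σ(X))(σ'(X;H)) holds, where σ'(X;H) ∈ ℝⁿ is the directional derivative of the singular value map. -/

import Mathlib

open Filter Topology Matrix

noncomputable section

abbrev Mat (m n : ℕ) := Matrix (Fin m) (Fin n) ℝ

namespace Paper

/-- Frobenius (trace) inner product on real matrices. -/
def finner {m n : ℕ} (X Y : Mat m n) : ℝ := ∑ i, ∑ j, X i j * Y i j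

/-- Frobenius norm. -/
def fnorm {m n : ℕ} (X : Mat m n) : ℝ := Real.sqrt (finner X X)

/-- Euclidean inner product on `ℝⁿ`. -/
def vinner {n : ℕ} (x y : Fin n → ℝ) : ℝ := ∑ i, x i * y i

/-- Euclidean norm on `ℝⁿ`. -/
def vnorm {n : ℕ} (x : Fin n → ℝ) : ℝ := Real.sqrt (vinner x x)

/-- Eigenvalues of a real symmetric matrix, arranged in nonincreasing order. -/
def eigs {k : ℕ} (A : Matrix (Fin k) (Fin k) ℝ) (hA : A.IsHermitian) : Fin k → ℝ :=
  fun i => hA.eigenvalues (Tuple.sort (fun j => -(hA.eigenvalues j)) i)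

/-- Singular values of a real `m × n` matrix, arranged in nonincreasing order. -/
def svals {m n : ℕ} (X : Mat m n) : Fin n → ℝ :=
  fun i => Real.sqrt (eigs (Xᵀ * X) (by simpa [Matrix.conjTranspose_eq_transpose_of_trivial] using Matrix.isHermitian_conjTranspose_mul_self X) i)

/-- The `m × n` matrix with `x` on the diagonal and zeros elsewhere. -/
def mdiag {m n : ℕ} (x : Fin n → ℝ) : Mat m n :=
  fun i j => if (i : ℕ) = (j : ℕ) then x j else 0

/-- The symmetric block matrix `B(X) = [[0, X], [Xᵀ, 0]]`, reindexed over `Fin (m+n)`. -/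
def bmat {m n : ℕ} (X : Mat m n) : Matrix (Fin (m + n)) (Fin (m + n)) ℝ :=
  Matrix.reindex finSumFinEquiv finSumFinEquiv (Matrix.fromBlocks 0 X Xᵀ 0)

lemma bmat_isHermitian {m n : ℕ} (X : Mat m n) : (bmat X).IsHermitian := by
  rw [Matrix.IsHermitian]
  ext i j
  simp only [bmat, Matrix.conjTranspose_apply, Matrix.reindex_apply, Matrix.submatrix_apply,
    star_trivial]
  rcases hi : finSumFinEquiv.symm i with a | a <;> rcases hj : finSumFinEquiv.symm j with b | b <;>
    simp [Matrix.fromBlocks, Matrix.transpose_apply]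

/-- Eigenvalues of `B(X)` in nonincreasing order. -/
def beigs {m n : ℕ} (X : Mat m n) : Fin (m + n) → ℝ :=
  eigs (bmat X) (bmat_isHermitian X)

/-- `Q` is a signed permutation matrix. -/
def IsSignedPerm {n : ℕ} (Q : Matrix (Fin n) (Fin n) ℝ) : Prop :=
  ∃ (e : Equiv.Perm (Fin n)) (s : Fin n → ℝ), (∀ i, s i = 1 ∨ s i = -1) ∧
    ∀ i j, Q i j = if j = e i then s i else 0

/-- A set of vectors invariant under all signed permutations. -/
def AbsSymSet {n : ℕ} (K : Set (Fin n → ℝ)) : Prop :=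
  ∀ Q, IsSignedPerm Q → ∀ x ∈ K, Q.mulVec x ∈ K

/-- An extended-real-valued absolutely symmetric function. -/
def AbsSymFun {n : ℕ} (f : (Fin n → ℝ) → EReal) : Prop :=
  ∀ Q, IsSignedPerm Q → ∀ x, f (Q.mulVec x) = f x

/-- Euclidean distance from a point to a set in `ℝⁿ`. -/
def vdist {n : ℕ} (x : Fin n → ℝ) (K : Set (Fin n → ℝ)) : ℝ :=
  sInf ((fun y => vnorm (x - y)) '' K)

/-- Frobenius distance from a matrix to a set of matrices. -/
def mdist {m n : ℕ} (X : Mat m n) (Γ : Set (Mat m n)) : ℝ :=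
  sInf ((fun Y => fnorm (X - Y)) '' Γ)

section Variational

variable {E : Type*} [AddCommGroup E] [Module ℝ E] [TopologicalSpace E]

/-- The subderivative `dg(x)(w) = liminf_{t↓0, w'→w} (g(x+tw') - g(x))/t`. -/
def subderiv (g : E → EReal) (x w : E) : EReal :=
  liminf (fun p : ℝ × E => ((p.1⁻¹ : ℝ) : EReal) * (g (x + p.1 • p.2) - g x))
    ((𝓝[>] (0 : ℝ)) ×ˢ 𝓝 w)

/-- The second-order difference quotient `Δ²_τ g(x | v)(w)`. -/
def secondQuot (ip : E → E → ℝ) (g : E → EReal) (x v : E) (τ : ℝ) (w : E) : EReal :=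
  ((2 / τ ^ 2 : ℝ) : EReal) * (g (x + τ • w) - g x - ((τ * ip v w : ℝ) : EReal))

/-- The second subderivative `d²g(x | v)(w)`. -/
def secondSubderiv (ip : E → E → ℝ) (g : E → EReal) (x v w : E) : EReal :=
  liminf (fun p : ℝ × E => secondQuot ip g x v p.1 p.2) ((𝓝[>] (0 : ℝ)) ×ˢ 𝓝 w)

/-- The parabolic difference quotient `Δ²_τ g(x)(w | z)`. -/
def parabQuot (g : E → EReal) (x w : E) (τ : ℝ) (z : E) : EReal :=
  ((2 / τ ^ 2 : ℝ) : EReal) *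
    (g (x + τ • w + (τ ^ 2 / 2) • z) - g x - ((τ : ℝ) : EReal) * subderiv g x w)

/-- The parabolic subderivative `d²g(x)(w | z)`. -/
def parabolicSubderiv (g : E → EReal) (x w z : E) : EReal :=
  liminf (fun p : ℝ × E => parabQuot g x w p.1 p.2) ((𝓝[>] (0 : ℝ)) ×ˢ 𝓝 z)

/-- Parabolic epi-differentiability of `g` at `x` for `w`. -/
def ParabEpiDiffAt (g : E → EReal) (x w : E) : Prop :=
  (∃ z, parabolicSubderiv g x w z < ⊤) ∧
  ∀ z : E, ∀ t : ℕ → ℝ, (∀ k, 0 < t k) → Tendsto t atTop (𝓝 0) →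
    ∃ zk : ℕ → E, Tendsto zk atTop (𝓝 z) ∧
      Tendsto (fun k => parabQuot g x w (t k) (zk k)) atTop (𝓝 (parabolicSubderiv g x w z))

/-- The (contingent) tangent cone to `C` at `x`. -/
def tangentConeOf (C : Set E) (x : E) : Set E :=
  {w | ∃ t : ℕ → ℝ, ∃ w' : ℕ → E, (∀ k, 0 < t k) ∧ Tendsto t atTop (𝓝 0) ∧
    Tendsto w' atTop (𝓝 w) ∧ ∀ k, x + t k • w' k ∈ C}

/-- The second-order tangent set to `C` at `x` for `w`. -/
def tangentCone2Of (C : Set E) (x w : E) : Set E :=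
  {u | ∃ t : ℕ → ℝ, ∃ u' : ℕ → E, (∀ k, 0 < t k) ∧ Tendsto t atTop (𝓝 0) ∧
    Tendsto u' atTop (𝓝 u) ∧ ∀ k, x + t k • w + (t k ^ 2 / 2) • u' k ∈ C}

/-- Parabolic derivability of the set `C` at `x` for `w`. -/
def ParabolicallyDerivable (C : Set E) (x w : E) : Prop :=
  (tangentCone2Of C x w).Nonempty ∧
  ∀ u ∈ tangentCone2Of C x w, ∃ ε > (0 : ℝ), ∃ ξ : ℝ → E,
    (∀ t ∈ Set.Icc (0 : ℝ) ε, ξ t ∈ C) ∧ ξ 0 = x ∧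
    Tendsto (fun t : ℝ => t⁻¹ • (ξ t - x)) (𝓝[>] 0) (𝓝 w) ∧
    Tendsto (fun t : ℝ => (2 / t ^ 2) • (ξ t - x - t • w)) (𝓝[>] 0) (𝓝 u)

/-- The convex subdifferential of `g` at `x` (w.r.t. the pairing `ip`). -/
def convSubdiff (ip : E → E → ℝ) (g : E → EReal) (x : E) : Set E :=
  {v | ∀ y, ((ip v (y - x) : ℝ) : EReal) + g x ≤ g y}

/-- Convexity for extended-real-valued functions. -/
def ConvexEReal (g : E → EReal) : Prop :=
  ∀ x y : E, ∀ t : ℝ, 0 ≤ t → t ≤ 1 →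
    g (t • x + (1 - t) • y) ≤ ((t : ℝ) : EReal) * g x + ((1 - t : ℝ) : EReal) * g y

end Variational

/-- Local Lipschitz continuity of `f` relative to its domain (everywhere on the domain). -/
def LocLipRelDom {n : ℕ} (f : (Fin n → ℝ) → EReal) : Prop :=
  ∀ x, f x ≠ ⊤ → ∃ l ≥ (0 : ℝ), ∃ U ∈ 𝓝 x, ∀ y ∈ U, ∀ z ∈ U, f y ≠ ⊤ → f z ≠ ⊤ →
    |(f y).toReal - (f z).toReal| ≤ l * vnorm (y - z)

/-- The columns of `U` with indices `r, r+1, …, k-1`. -/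
def colsFrom {k : ℕ} (r : ℕ) (U : Matrix (Fin k) (Fin k) ℝ) :
    Matrix (Fin k) (Fin (k - r)) ℝ :=
  fun i j => U i ⟨r + (j : ℕ), by have := j.isLt; omega⟩

/-- The first `r` columns of `U`. -/
def firstCols {k : ℕ} (r : ℕ) (h : r ≤ k) (U : Matrix (Fin k) (Fin k) ℝ) :
    Matrix (Fin k) (Fin r) ℝ :=
  fun i j => U i (Fin.castLE h j)

/-- The submatrix of `M` with rows `a ≤ · < b` and columns `c ≤ · < d`. -/
def subBlock {p q : ℕ} (M : Matrix (Fin p) (Fin q) ℝ) (a b c d : ℕ)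
    (h1 : b ≤ p) (h2 : d ≤ q) : Matrix (Fin (b - a)) (Fin (d - c)) ℝ :=
  fun i j => M ⟨a + (i : ℕ), by have := i.isLt; omega⟩ ⟨c + (j : ℕ), by have := j.isLt; omega⟩

/-- Nuclear norm: the sum of all singular values. -/
def nucNorm {m n : ℕ} (A : Mat m n) : ℝ := ∑ j, svals A j

/-- `Ψₙ(X) = σ_{r+1}(X) + ⋯ + σ_n(X)`, the sum of the `n - r` smallest singular values. -/
def psiN {m n : ℕ} (r : ℕ) (X : Mat m n) : ℝ :=
  ∑ s : Fin n, if r ≤ (s : ℕ) then svals X s else 0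

/-- The regular (Fréchet) subdifferential of a real-valued function on matrices. -/
def regSubdiff {m n : ℕ} (g : Mat m n → ℝ) (X : Mat m n) : Set (Mat m n) :=
  {V | ∀ ε > (0 : ℝ), ∀ᶠ Y in 𝓝 X, g X + finner V (Y - X) - ε * fnorm (Y - X) ≤ g Y}

/-- Two square matrices admit a simultaneous ordered spectral decomposition. -/
def SimSpec {k : ℕ} (A B : Matrix (Fin k) (Fin k) ℝ) : Prop :=
  ∃ (W : Matrix (Fin k) (Fin k) ℝ) (a b : Fin k → ℝ), Wᵀ * W = 1 ∧
    Antitone a ∧ Antitone b ∧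
    A = W * Matrix.diagonal a * Wᵀ ∧ B = W * Matrix.diagonal b * Wᵀ

/-- Two rectangular matrices admit a simultaneous ordered singular value decomposition. -/
def SimSVD {p q : ℕ} (A B : Matrix (Fin p) (Fin q) ℝ) : Prop :=
  ∃ (U : Matrix (Fin p) (Fin p) ℝ) (V : Matrix (Fin q) (Fin q) ℝ)
    (a b : Fin q → ℝ), Uᵀ * U = 1 ∧ Vᵀ * V = 1 ∧
    Antitone a ∧ Antitone b ∧ (∀ j, 0 ≤ a j) ∧ (∀ j, 0 ≤ b j) ∧
    A = U * (mdiag a : Mat p q) * Vᵀ ∧ B = U * (mdiag b : Mat p q) * Vᵀ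

end Paper

open Paper

/-!
Weyl's inequality `σ_s(B) ≤ σ_s(A) + ‖B - A‖_F` makes `σ` Lipschitz, so the difference quotients
`(σ(X + tH') - σ(X)) / t` converge to `σ'(X;H)` jointly as `t ↓ 0` and `H' → H`; this gives
`df(σ(X))(σ'(X;H)) ≤ d(f∘σ)(X)(H)`.

Conversely, write `X + tH = U_t diag(σ(X + tH)) V_tᵀ` and, for `w` near `σ'(X;H)`, put
`Y = U_t diag(σ(X) + tw) V_tᵀ`. Absolute symmetry gives `f(σ(Y)) = f(σ(X) + tw)`, while
`‖(Y - X)/t - H‖_F = ‖w - (σ(X + tH) - σ(X))/t‖ → 0`; this gives the reverse inequality.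
-/

lemma eventually_pos_fst_nhdsGT_prod {α : Type*} (l : Filter α) :
    ∀ᶠ p : ℝ × α in (𝓝[>] 0) ×ˢ l, 0 < p.1 :=
  (eventually_mem_nhdsWithin (s := Set.Ioi 0)).prod_inl l

lemma subderiv_le_of_forall_eq {E F : Type*} [AddCommGroup E] [Module ℝ E] [TopologicalSpace E]
    [AddCommGroup F] [Module ℝ F] [TopologicalSpace F] {g : E → EReal} {h : F → EReal}
    {x w : E} {y v : F} (z : ℝ × F → E)
    (hz : Tendsto (fun p => p.1⁻¹ • (z p - x)) ((𝓝[>] 0) ×ˢ 𝓝 v) (𝓝 w))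
    (hxy : g x = h y) (hgz : ∀ p : ℝ × F, g (z p) = h (y + p.1 • p.2)) :
    subderiv g x w ≤ subderiv h y v := by
  set ψ : ℝ × F → ℝ × E := fun p => (p.1, p.1⁻¹ • (z p - x))
  have hψ : Tendsto ψ ((𝓝[>] 0) ×ˢ 𝓝 v) ((𝓝[>] 0) ×ˢ 𝓝 w) := tendsto_fst.prodMk hz
  calc subderiv g x w
      ≤ liminf (fun p : ℝ × E => ((p.1⁻¹ : ℝ) : EReal) * (g (x + p.1 • p.2) - g x))
          (map ψ ((𝓝[>] 0) ×ˢ 𝓝 v)) := liminf_le_liminf_of_le hψ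
    _ = subderiv h y v := by
      rw [← liminf_comp]
      refine liminf_congr ?_
      filter_upwards [eventually_pos_fst_nhdsGT_prod (𝓝 v)] with p hp
      simp [ψ, hgz, hxy, smul_smul, mul_inv_cancel₀ hp.ne']

lemma LipschitzWith.tendsto_inv_smul_sub_prod {E F : Type*} [SeminormedAddCommGroup E]
    [NormedSpace ℝ E] [SeminormedAddCommGroup F] [NormedSpace ℝ F] {g : E → F} {K : NNReal}
    (hg : LipschitzWith K g) {x w : E} {d : F}
    (hd : Tendsto (fun t : ℝ => t⁻¹ • (g (x + t • w) - g x)) (𝓝[>] 0) (𝓝 d)) :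
    Tendsto (fun p : ℝ × E => p.1⁻¹ • (g (x + p.1 • p.2) - g x)) ((𝓝[>] 0) ×ˢ 𝓝 w) (𝓝 d) := by
  have hK : Tendsto (fun p : ℝ × E => K * ‖p.2 - w‖) ((𝓝[>] 0) ×ˢ 𝓝 w) (𝓝 0) := by
    simpa using ((tendsto_snd (f := 𝓝[>] (0 : ℝ)) (g := 𝓝 w)).sub_const w).norm.const_mul (K : ℝ)
  have hdiff : Tendsto (fun p : ℝ × E => p.1⁻¹ • (g (x + p.1 • p.2) - g (x + p.1 • w)))
      ((𝓝[>] 0) ×ˢ 𝓝 w) (𝓝 0) := by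
    refine squeeze_zero_norm' ?_ hK
    filter_upwards [eventually_pos_fst_nhdsGT_prod (𝓝 w)] with p hp
    rw [norm_smul, norm_inv, Real.norm_of_nonneg hp.le, inv_mul_le_iff₀ hp]
    calc ‖g (x + p.1 • p.2) - g (x + p.1 • w)‖ ≤ K * ‖(x + p.1 • p.2) - (x + p.1 • w)‖ :=
          hg.norm_sub_le _ _
      _ = p.1 * (K * ‖p.2 - w‖) := by
          rw [add_sub_add_left_eq_sub, ← smul_sub, norm_smul, Real.norm_of_nonneg hp.le]
          ring
  simpa [← smul_add] using (hd.comp tendsto_fst).add hdiff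

namespace Paper

section Orthogonal

variable {ι : Type*} [Fintype ι] [DecidableEq ι]

lemma submatrix_id_mem_orthogonalGroup {W : Matrix ι ι ℝ} (hW : W ∈ orthogonalGroup ι ℝ)
    (e : Equiv.Perm ι) : W.submatrix id e ∈ orthogonalGroup ι ℝ := by
  rw [mem_orthogonalGroup_iff] at hW ⊢
  rw [transpose_submatrix, submatrix_mul_equiv, submatrix_id_id, hW]

lemma conj_diagonal_eq_submatrix (W : Matrix ι ι ℝ) (d : ι → ℝ) (e : Equiv.Perm ι) :
    W * diagonal d * Wᵀ = W.submatrix id e * diagonal (d ∘ e) * (W.submatrix id e)ᵀ := by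
  rw [← submatrix_diagonal_equiv, transpose_submatrix, submatrix_mul_equiv, submatrix_mul_equiv,
    submatrix_id_id]

open Polynomial in
lemma charpoly_conj_diagonal {W : Matrix ι ι ℝ} (hW : W ∈ orthogonalGroup ι ℝ) (d : ι → ℝ) :
    (W * diagonal d * Wᵀ).charpoly = ∏ i, (X - C (d i)) := by
  rw [mul_assoc, charpoly_mul_comm, mul_assoc, (mem_orthogonalGroup_iff' ι ℝ).1 hW, mul_one,
    charpoly_diagonal]

end Orthogonal

section Eigenvalues

variable {k : ℕ}

lemma eigs_antitone {A : Matrix (Fin k) (Fin k) ℝ} (hA : A.IsHermitian) :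
    Antitone (eigs A hA) := by
  intro i j hij
  simpa [eigs] using Tuple.monotone_sort (fun j => -hA.eigenvalues j) hij

lemma exists_orthogonal_eq_conj_diagonal_eigs {A : Matrix (Fin k) (Fin k) ℝ}
    (hA : A.IsHermitian) :
    ∃ W ∈ orthogonalGroup (Fin k) ℝ, A = W * diagonal (eigs A hA) * Wᵀ := by
  refine ⟨_, submatrix_id_mem_orthogonalGroup hA.eigenvectorUnitary.2
    (Tuple.sort fun j => -hA.eigenvalues j), ?_⟩
  refine (hA.spectral_theorem.trans ?_).trans (conj_diagonal_eq_submatrix _ _ _)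
  simp [Unitary.conjStarAlgAut_apply, star_eq_conjTranspose]

lemma antitone_eq_of_map_univ_eq {d e : Fin k → ℝ} (hd : Antitone d) (he : Antitone e)
    (h : Finset.univ.val.map d = Finset.univ.val.map e) : d = e := by
  have hsort : ∀ f : Fin k → ℝ, Antitone f →
      (Finset.univ.val.map f).sort (· ≥ ·) = List.ofFn f := by
    intro f hf
    rw [Fin.univ_val_map, Multiset.coe_sort]
    exact List.mergeSort_of_pairwise
      (List.pairwise_ofFn.mpr fun i j hij => by simpa using hf hij.le)
  rw [← List.ofFn_inj, ← hsort d hd, ← hsort e he, h]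

lemma eigs_eq_of_eq_conj_diagonal {A : Matrix (Fin k) (Fin k) ℝ} (hA : A.IsHermitian)
    {W : Matrix (Fin k) (Fin k) ℝ} {d : Fin k → ℝ} (hW : W ∈ orthogonalGroup (Fin k) ℝ)
    (hd : Antitone d) (h : A = W * diagonal d * Wᵀ) : eigs A hA = d := by
  obtain ⟨W₀, hW₀, h₀⟩ := exists_orthogonal_eq_conj_diagonal_eigs hA
  have hchar := (charpoly_conj_diagonal hW₀ (eigs A hA)).symm.trans
    ((congrArg charpoly (h₀.symm.trans h)).trans (charpoly_conj_diagonal hW d))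
  have hroots := congrArg Polynomial.roots hchar
  have hne : ∀ c : Fin k → ℝ, ∏ i, (Polynomial.X - Polynomial.C (c i)) ≠ 0 := fun c => by
    simp [Finset.prod_ne_zero_iff, Polynomial.X_sub_C_ne_zero]
  rw [Polynomial.roots_prod _ _ (hne _), Polynomial.roots_prod _ _ (hne _)] at hroots
  exact antitone_eq_of_map_univ_eq (eigs_antitone hA) hd
    (by simpa [Multiset.bind_singleton] using hroots)

lemma dotProduct_mulVec_conj_diagonal (W : Matrix (Fin k) (Fin k) ℝ) (d : Fin k → ℝ)
    (x : Fin k → ℝ) : x ⬝ᵥ (W * diagonal d * Wᵀ) *ᵥ x = ∑ i, d i * (Wᵀ *ᵥ x) i ^ 2 := by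
  rw [← mulVec_mulVec, ← mulVec_mulVec, dotProduct_mulVec, ← mulVec_transpose, dotProduct]
  exact Finset.sum_congr rfl fun i _ => by rw [mulVec_diagonal]; ring

lemma dotProduct_self_eq_sum_sq {W : Matrix (Fin k) (Fin k) ℝ}
    (hW : W ∈ orthogonalGroup (Fin k) ℝ) (x : Fin k → ℝ) :
    x ⬝ᵥ x = ∑ i, (Wᵀ *ᵥ x) i ^ 2 := by
  have h := dotProduct_mulVec_conj_diagonal W 1 x
  rwa [Pi.one_def, diagonal_one, Matrix.mul_one, (mem_orthogonalGroup_iff (Fin k) ℝ).1 hW,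
    one_mulVec, Finset.sum_congr rfl fun i _ => one_mul _] at h

lemma dotProduct_mulVec_conj_diagonal_le {W : Matrix (Fin k) (Fin k) ℝ}
    (hW : W ∈ orthogonalGroup (Fin k) ℝ) {d : Fin k → ℝ} (hd : Antitone d) {x : Fin k → ℝ}
    {s : Fin k} (hx : ∀ i < s, (Wᵀ *ᵥ x) i = 0) :
    x ⬝ᵥ (W * diagonal d * Wᵀ) *ᵥ x ≤ d s * (x ⬝ᵥ x) := by
  rw [dotProduct_mulVec_conj_diagonal, dotProduct_self_eq_sum_sq hW, Finset.mul_sum]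
  refine Finset.sum_le_sum fun i _ => ?_
  rcases lt_or_ge i s with h | h
  · simp [hx i h]
  · exact mul_le_mul_of_nonneg_right (hd h) (sq_nonneg _)

lemma le_dotProduct_mulVec_conj_diagonal {W : Matrix (Fin k) (Fin k) ℝ}
    (hW : W ∈ orthogonalGroup (Fin k) ℝ) {d : Fin k → ℝ} (hd : Antitone d) {x : Fin k → ℝ}
    {s : Fin k} (hx : ∀ i, s < i → (Wᵀ *ᵥ x) i = 0) :
    d s * (x ⬝ᵥ x) ≤ x ⬝ᵥ (W * diagonal d * Wᵀ) *ᵥ x := by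
  rw [dotProduct_mulVec_conj_diagonal, dotProduct_self_eq_sum_sq hW, Finset.mul_sum]
  refine Finset.sum_le_sum fun i _ => ?_
  rcases lt_or_ge s i with h | h
  · simp [hx i h]
  · exact mul_le_mul_of_nonneg_right (hd h) (sq_nonneg _)

lemma exists_ne_zero_mulVec_eq_zero_of_lt_of_gt (P Q : Matrix (Fin k) (Fin k) ℝ) (s : Fin k) :
    ∃ x ≠ 0, (∀ i < s, (P *ᵥ x) i = 0) ∧ ∀ i, s < i → (Q *ᵥ x) i = 0 := by
  set R : Matrix {i // i ≠ s} (Fin k) ℝ := Matrix.of fun i => if i.1 < s then P i.1 else Q i.1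
  have hker : LinearMap.ker R.mulVecLin ≠ ⊥ := by
    apply LinearMap.ker_ne_bot_of_finrank_lt
    simp only [Module.finrank_fintype_fun_eq_card, Fintype.card_fin]
    rw [Fintype.card_subtype_compl, Fintype.card_fin, Fintype.card_unique]
    exact Nat.sub_lt s.pos one_pos
  obtain ⟨x, hxR, hx0⟩ := (Submodule.ne_bot_iff _).mp hker
  have hR : ∀ i : {i // i ≠ s}, (R *ᵥ x) i = 0 := fun i => congrFun hxR i
  refine ⟨x, hx0, fun i hi => ?_, fun i hi => ?_⟩
  · simpa [R, mulVec, hi] using hR ⟨i, hi.ne⟩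
  · simpa [R, mulVec, hi.not_gt] using hR ⟨i, hi.ne'⟩

end Eigenvalues

section SVD

variable {m n : ℕ}

lemma isHermitian_transpose_mul_self (A : Mat m n) : (Aᵀ * A).IsHermitian := by
  simpa [conjTranspose_eq_transpose_of_trivial] using isHermitian_conjTranspose_mul_self A

lemma svals_eq_sqrt_eigs (A : Mat m n) (hA : (Aᵀ * A).IsHermitian) (i : Fin n) :
    svals A i = √(eigs (Aᵀ * A) hA i) := rfl

lemma svals_nonneg (A : Mat m n) (i : Fin n) : 0 ≤ svals A i := Real.sqrt_nonneg _

lemma svals_mul_self (A : Mat m n) (hA : (Aᵀ * A).IsHermitian) (i : Fin n) :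
    svals A i * svals A i = eigs (Aᵀ * A) hA i := by
  have hpsd : (Aᵀ * A).PosSemidef := by
    simpa [conjTranspose_eq_transpose_of_trivial] using posSemidef_conjTranspose_mul_self A
  exact Real.mul_self_sqrt (hpsd.eigenvalues_nonneg _)

lemma mdiag_zero : (mdiag 0 : Mat m n) = 0 := by
  ext i j
  simp [mdiag]

lemma mdiag_add (x y : Fin n → ℝ) : (mdiag (x + y) : Mat m n) = mdiag x + mdiag y := by
  ext i j
  simp only [mdiag, Pi.add_apply, Matrix.add_apply]
  split_ifs <;> simp

lemma mdiag_sub (x y : Fin n → ℝ) : (mdiag (x - y) : Mat m n) = mdiag x - mdiag y := by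
  ext i j
  simp only [mdiag, Pi.sub_apply, Matrix.sub_apply]
  split_ifs <;> simp

lemma mdiag_smul (c : ℝ) (x : Fin n → ℝ) : (mdiag (c • x) : Mat m n) = c • mdiag x := by
  ext i j
  simp only [mdiag, Pi.smul_apply, Matrix.smul_apply]
  split_ifs <;> simp

lemma continuous_mdiag : Continuous (mdiag : (Fin n → ℝ) → Mat m n) :=
  continuous_pi fun _ => continuous_pi fun j => by
    simp only [mdiag]
    split_ifs
    exacts [continuous_apply j, continuous_const]

lemma mdiag_transpose_mul_mdiag (hmn : n ≤ m) (y z : Fin n → ℝ) :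
    (mdiag y : Mat m n)ᵀ * (mdiag z : Mat m n) = diagonal (y * z) := by
  ext j l
  rw [mul_apply, Finset.sum_eq_single (Fin.castLE hmn j)]
  · by_cases h : j = l
    · simp [mdiag, h]
    · simp [mdiag, diagonal, h, Fin.val_ne_of_ne h]
  · intro i _ hi
    have : (i : ℕ) ≠ j := fun h => hi (Fin.ext h)
    simp [mdiag, this]
  · simp

lemma mul_mdiag_apply (hmn : n ≤ m) (U : Matrix (Fin m) (Fin m) ℝ) (y : Fin n → ℝ)
    (i : Fin m) (j : Fin n) : (U * (mdiag y : Mat m n)) i j = U i (Fin.castLE hmn j) * y j := by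
  rw [mul_apply, Finset.sum_eq_single (Fin.castLE hmn j)]
  · simp [mdiag]
  · intro l _ hl
    have : (l : ℕ) ≠ j := fun h => hl (Fin.ext h)
    simp [mdiag, this]
  · simp

lemma svals_orthogonal_mul_mdiag_mul (hmn : n ≤ m) {U : Matrix (Fin m) (Fin m) ℝ}
    {V : Matrix (Fin n) (Fin n) ℝ} (hU : U ∈ orthogonalGroup (Fin m) ℝ)
    (hV : V ∈ orthogonalGroup (Fin n) ℝ) (y : Fin n → ℝ) :
    ∃ e : Equiv.Perm (Fin n), svals (U * (mdiag y : Mat m n) * Vᵀ) = fun i => |y (e i)| := by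
  set M : Mat m n := U * (mdiag y : Mat m n) * Vᵀ
  set e := Tuple.sort fun j => -|y j|
  have hMM : Mᵀ * M = V * diagonal (y * y) * Vᵀ := by
    simp only [M, transpose_mul, transpose_transpose, Matrix.mul_assoc]
    rw [← Matrix.mul_assoc Uᵀ, (mem_orthogonalGroup_iff' (Fin m) ℝ).1 hU, Matrix.one_mul,
      ← Matrix.mul_assoc (mdiag y : Mat m n)ᵀ, mdiag_transpose_mul_mdiag hmn]
  have hanti : Antitone ((y * y) ∘ e) := by
    intro i j hij
    have := Tuple.monotone_sort (fun j => -|y j|) hij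
    simp only [Function.comp_apply, neg_le_neg_iff, Pi.mul_apply,
      ← abs_mul_abs_self (y _)] at this ⊢
    exact mul_self_le_mul_self (abs_nonneg _) this
  have heigs := eigs_eq_of_eq_conj_diagonal (isHermitian_transpose_mul_self M)
    (submatrix_id_mem_orthogonalGroup hV e) hanti (hMM.trans (conj_diagonal_eq_submatrix V _ e))
  refine ⟨e, funext fun i => ?_⟩
  rw [svals_eq_sqrt_eigs M (isHermitian_transpose_mul_self M), heigs]
  exact Real.sqrt_mul_self_eq_abs _

lemma AbsSymFun.apply_abs_comp_perm {f : (Fin n → ℝ) → EReal} (hf : AbsSymFun f)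
    (y : Fin n → ℝ) (e : Equiv.Perm (Fin n)) : f (fun i => |y (e i)|) = f y := by
  classical
  set sgn : Fin n → ℝ := fun i => if y (e i) < 0 then -1 else 1
  have hQ : IsSignedPerm (Matrix.of fun i j => if j = e i then sgn i else 0) :=
    ⟨e, sgn, fun i => by by_cases h : y (e i) < 0 <;> simp [sgn, h], fun _ _ => rfl⟩
  rw [← hf _ hQ y]
  congr 1
  funext i
  rw [mulVec, dotProduct, Finset.sum_eq_single (e i) (fun j _ hj => by simp [hj]) (by simp)]
  by_cases h : y (e i) < 0
  · simp [sgn, h, abs_of_neg h]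
  · simp [sgn, h, abs_of_nonneg (not_lt.mp h)]

lemma AbsSymFun.apply_svals_orthogonal_mul_mdiag_mul (hmn : n ≤ m)
    {f : (Fin n → ℝ) → EReal} (hf : AbsSymFun f) {U : Matrix (Fin m) (Fin m) ℝ}
    {V : Matrix (Fin n) (Fin n) ℝ} (hU : U ∈ orthogonalGroup (Fin m) ℝ)
    (hV : V ∈ orthogonalGroup (Fin n) ℝ) (y : Fin n → ℝ) :
    f (svals (U * (mdiag y : Mat m n) * Vᵀ)) = f y := by
  obtain ⟨e, he⟩ := svals_orthogonal_mul_mdiag_mul hmn hU hV y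
  rw [he, hf.apply_abs_comp_perm]

/- The columns of `M` are pairwise orthogonal with norms `σ`; Gram–Schmidt normalises the
nonzero ones and completes them to an orthonormal basis. -/
lemma exists_orthogonal_eq_mul_mdiag (hmn : n ≤ m) (M : Mat m n) {σ : Fin n → ℝ}
    (hσ : 0 ≤ σ) (hM : Mᵀ * M = diagonal (σ * σ)) :
    ∃ U ∈ orthogonalGroup (Fin m) ℝ, M = U * (mdiag σ : Mat m n) := by
  set col : Fin m → EuclideanSpace ℝ (Fin m) := fun i =>
    if h : (i : ℕ) < n then WithLp.toLp 2 (Mᵀ ⟨i, h⟩) else 0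
  have hinner : ∀ j l : Fin n, inner ℝ (WithLp.toLp 2 (Mᵀ j)) (WithLp.toLp 2 (Mᵀ l)) =
      if j = l then σ j * σ j else 0 := by
    intro j l
    have hlj := congrFun (congrFun hM l) j
    rw [mul_apply, diagonal_apply] at hlj
    rw [EuclideanSpace.inner_eq_star_dotProduct]
    simp only [star_trivial, dotProduct, transpose_apply] at hlj ⊢
    rw [hlj]
    by_cases h : j = l
    · simp [h]
    · simp [h, Ne.symm h]
  have horth : Pairwise fun i i' => inner ℝ (col i) (col i') = 0 := by
    intro i i' hii'
    simp only [col]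
    split_ifs with h h'
    · rw [hinner, if_neg]
      intro hc
      exact hii' (Fin.ext (Fin.mk.inj_iff.mp hc))
    all_goals simp
  have hnorm : ∀ j, ‖WithLp.toLp 2 (Mᵀ j)‖ = σ j := by
    intro j
    rw [norm_eq_sqrt_re_inner (𝕜 := ℝ), RCLike.re_to_real, hinner, if_pos rfl]
    exact Real.sqrt_mul_self (hσ j)
  set b := InnerProductSpace.gramSchmidtOrthonormalBasis (𝕜 := ℝ) (by simp) col
  refine ⟨(EuclideanSpace.basisFun (Fin m) ℝ).toBasis.toMatrix b,
    (EuclideanSpace.basisFun (Fin m) ℝ).toMatrix_orthonormalBasis_mem_orthogonal b, ?_⟩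
  ext i j
  have hcol : col (Fin.castLE hmn j) = WithLp.toLp 2 (Mᵀ j) := by simp [col]
  rw [mul_mdiag_apply hmn, Module.Basis.toMatrix_apply, OrthonormalBasis.coe_toBasis_repr_apply,
    EuclideanSpace.basisFun_repr]
  by_cases hj : σ j = 0
  · have hMj : WithLp.toLp 2 (Mᵀ j) = 0 := by rw [← norm_eq_zero, hnorm, hj]
    have hMij := congrArg (fun v : EuclideanSpace ℝ (Fin m) => v i) hMj
    simp only [transpose_apply] at hMij
    simp [hMij, hj]
  · have hne : col (Fin.castLE hmn j) ≠ 0 := by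
      rw [hcol, ← norm_ne_zero_iff, hnorm]
      exact hj
    rw [InnerProductSpace.gramSchmidtOrthonormalBasis_apply_of_orthogonal _ horth hne, hcol, hnorm]
    simp only [Real.ringHom_apply, PiLp.smul_apply, transpose_apply, smul_eq_mul]
    field_simp

lemma exists_svd (hmn : n ≤ m) (A : Mat m n) :
    ∃ U ∈ orthogonalGroup (Fin m) ℝ, ∃ V ∈ orthogonalGroup (Fin n) ℝ,
      A = U * (mdiag (svals A) : Mat m n) * Vᵀ := by
  have hA := isHermitian_transpose_mul_self A
  obtain ⟨V, hV, hAV⟩ := exists_orthogonal_eq_conj_diagonal_eigs hA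
  have hVV : Vᵀ * V = 1 := (mem_orthogonalGroup_iff' (Fin n) ℝ).1 hV
  have hsq : svals A * svals A = eigs (Aᵀ * A) hA := funext (svals_mul_self A hA)
  obtain ⟨U, hU, hAVU⟩ := exists_orthogonal_eq_mul_mdiag hmn (A * V) (svals_nonneg A) (by
    rw [transpose_mul, Matrix.mul_assoc, ← Matrix.mul_assoc Aᵀ, hAV, hsq]
    simp only [Matrix.mul_assoc, hVV, Matrix.mul_one]
    rw [← Matrix.mul_assoc, hVV, Matrix.one_mul])
  refine ⟨U, hU, V, hV, ?_⟩
  rw [← hAVU, Matrix.mul_assoc, (mem_orthogonalGroup_iff (Fin n) ℝ).1 hV, Matrix.mul_one]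

end SVD

section Frobenius

/- The Frobenius norm induces the product topology, so the norm-free statements below are about
the ambient topology of `Mat m n`. -/
attribute [local instance] Matrix.frobeniusNormedAddCommGroup Matrix.frobeniusNormedSpace

variable {ι κ : Type*} [Fintype ι] [Fintype κ]

lemma frobenius_norm_sq_eq_trace (A : Matrix ι κ ℝ) : ‖A‖ ^ 2 = trace (Aᵀ * A) := by
  rw [frobenius_norm_def, ← Real.rpow_natCast, ← Real.rpow_mul (by positivity), Nat.cast_ofNat,
    one_div_mul_cancel two_ne_zero, Real.rpow_one, trace, Finset.sum_comm]
  simp [mul_apply, sq]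

lemma frobenius_norm_orthogonal_mul [DecidableEq ι] {U : Matrix ι ι ℝ}
    (hU : U ∈ orthogonalGroup ι ℝ) (A : Matrix ι κ ℝ) : ‖U * A‖ = ‖A‖ := by
  refine (sq_eq_sq₀ (norm_nonneg _) (norm_nonneg _)).mp ?_
  rw [frobenius_norm_sq_eq_trace, frobenius_norm_sq_eq_trace, transpose_mul, Matrix.mul_assoc,
    ← Matrix.mul_assoc Uᵀ, (mem_orthogonalGroup_iff' ι ℝ).1 hU, Matrix.one_mul]

lemma frobenius_norm_orthogonal_mul_mul_transpose [DecidableEq ι] [DecidableEq κ]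
    {U : Matrix ι ι ℝ} {V : Matrix κ κ ℝ} (hU : U ∈ orthogonalGroup ι ℝ)
    (hV : V ∈ orthogonalGroup κ ℝ) (A : Matrix ι κ ℝ) : ‖U * A * Vᵀ‖ = ‖A‖ := by
  rw [Matrix.mul_assoc, frobenius_norm_orthogonal_mul hU, ← frobenius_norm_transpose,
    transpose_mul, transpose_transpose, frobenius_norm_orthogonal_mul hV,
    frobenius_norm_transpose]

variable {m n : ℕ}

lemma norm_toLp_sq (x : Fin n → ℝ) : ‖WithLp.toLp 2 x‖ ^ 2 = x ⬝ᵥ x := by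
  rw [EuclideanSpace.norm_sq_eq]
  simp [dotProduct, sq]

lemma norm_toLp_mulVec_sq (A : Mat m n) (x : Fin n → ℝ) :
    ‖WithLp.toLp 2 (A *ᵥ x)‖ ^ 2 = x ⬝ᵥ (Aᵀ * A) *ᵥ x := by
  rw [norm_toLp_sq, ← mulVec_mulVec, dotProduct_mulVec, ← mulVec_transpose, dotProduct_comm]

lemma norm_toLp_mulVec_le (M : Mat m n) (x : Fin n → ℝ) :
    ‖WithLp.toLp 2 (M *ᵥ x)‖ ≤ ‖M‖ * ‖WithLp.toLp 2 x‖ := by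
  simpa only [← replicateCol_mulVec, frobenius_norm_replicateCol] using
    frobenius_norm_mul M (replicateCol Unit x)

/- Courant–Fischer: evaluate both Rayleigh quotients at an `x ≠ 0` orthogonal to the eigenvectors
of `AᵀA` of index `< s` and to those of `BᵀB` of index `> s`. -/
lemma svals_le_svals_add_norm_sub (A B : Mat m n) (s : Fin n) :
    svals B s ≤ svals A s + ‖B - A‖ := by
  have hA := isHermitian_transpose_mul_self A
  have hB := isHermitian_transpose_mul_self B
  obtain ⟨WA, hWA, hAW⟩ := exists_orthogonal_eq_conj_diagonal_eigs hA
  obtain ⟨WB, hWB, hBW⟩ := exists_orthogonal_eq_conj_diagonal_eigs hB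
  obtain ⟨x, hx0, hxA, hxB⟩ := exists_ne_zero_mulVec_eq_zero_of_lt_of_gt WAᵀ WBᵀ s
  have hAx : ‖WithLp.toLp 2 (A *ᵥ x)‖ ≤ svals A s * ‖WithLp.toLp 2 x‖ := by
    refine (pow_le_pow_iff_left₀ (norm_nonneg _)
      (mul_nonneg (svals_nonneg A s) (norm_nonneg _)) two_ne_zero).mp ?_
    rw [mul_pow, sq (svals A s), svals_mul_self A hA, norm_toLp_mulVec_sq, norm_toLp_sq]
    simpa only [← hAW] using dotProduct_mulVec_conj_diagonal_le hWA (eigs_antitone hA) hxA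
  have hBx : svals B s * ‖WithLp.toLp 2 x‖ ≤ ‖WithLp.toLp 2 (B *ᵥ x)‖ := by
    refine (pow_le_pow_iff_left₀ (mul_nonneg (svals_nonneg B s) (norm_nonneg _))
      (norm_nonneg _) two_ne_zero).mp ?_
    rw [mul_pow, sq (svals B s), svals_mul_self B hB, norm_toLp_mulVec_sq, norm_toLp_sq]
    simpa only [← hBW] using le_dotProduct_mulVec_conj_diagonal hWB (eigs_antitone hB) hxB
  have hx : 0 < ‖WithLp.toLp 2 x‖ := norm_pos_iff.mpr (by simpa using hx0)
  refine le_of_mul_le_mul_right ?_ hx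
  calc svals B s * ‖WithLp.toLp 2 x‖
      ≤ ‖WithLp.toLp 2 (A *ᵥ x)‖ + ‖WithLp.toLp 2 ((B - A) *ᵥ x)‖ := by
        refine hBx.trans ?_
        rw [sub_mulVec, WithLp.toLp_sub]
        exact norm_le_insert' _ _
    _ ≤ (svals A s + ‖B - A‖) * ‖WithLp.toLp 2 x‖ := by
        rw [add_mul]
        exact add_le_add hAx (norm_toLp_mulVec_le _ _)

lemma lipschitzWith_svals : LipschitzWith 1 (svals : Mat m n → Fin n → ℝ) := by
  refine LipschitzWith.of_dist_le_mul fun A B => ?_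
  rw [NNReal.coe_one, one_mul, dist_pi_le_iff dist_nonneg]
  intro s
  rw [Real.dist_eq, abs_sub_le_iff, dist_eq_norm]
  constructor
  · linarith [svals_le_svals_add_norm_sub B A s]
  · linarith [svals_le_svals_add_norm_sub A B s, norm_sub_rev A B]

lemma tendsto_inv_smul_svals_sub {X H : Mat m n} {ds : Fin n → ℝ}
    (hds : Tendsto (fun t : ℝ => t⁻¹ • (svals (X + t • H) - svals X)) (𝓝[>] 0) (𝓝 ds)) :
    Tendsto (fun p : ℝ × Mat m n => p.1⁻¹ • (svals (X + p.1 • p.2) - svals X))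
      ((𝓝[>] 0) ×ˢ 𝓝 H) (𝓝 ds) :=
  lipschitzWith_svals.tendsto_inv_smul_sub_prod hds

lemma tendsto_inv_smul_conj_mdiag_sub {X H : Mat m n} {a ds : Fin n → ℝ}
    {φ : ℝ → Fin n → ℝ} {U : ℝ → Matrix (Fin m) (Fin m) ℝ} {V : ℝ → Matrix (Fin n) (Fin n) ℝ}
    (hU : ∀ t, U t ∈ orthogonalGroup (Fin m) ℝ) (hV : ∀ t, V t ∈ orthogonalGroup (Fin n) ℝ)
    (hX : ∀ t, X + t • H = U t * (mdiag (φ t) : Mat m n) * (V t)ᵀ)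
    (hφ : Tendsto (fun t : ℝ => t⁻¹ • (φ t - a)) (𝓝[>] 0) (𝓝 ds)) :
    Tendsto (fun p : ℝ × (Fin n → ℝ) =>
        p.1⁻¹ • (U p.1 * (mdiag (a + p.1 • p.2) : Mat m n) * (V p.1)ᵀ - X))
      ((𝓝[>] 0) ×ˢ 𝓝 ds) (𝓝 H) := by
  set z : ℝ × (Fin n → ℝ) → Fin n → ℝ := fun p => p.2 - p.1⁻¹ • (φ p.1 - a)
  have hz : Tendsto z ((𝓝[>] 0) ×ˢ 𝓝 ds) (𝓝 0) := by
    have := (tendsto_snd (f := 𝓝[>] (0 : ℝ)) (g := 𝓝 ds)).sub (hφ.comp tendsto_fst)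
    rwa [sub_self] at this
  have hmz : Tendsto (fun p => ‖(mdiag (z p) : Mat m n)‖) ((𝓝[>] 0) ×ˢ 𝓝 ds) (𝓝 0) := by
    simpa [Function.comp_def, mdiag_zero] using
      ((continuous_norm.comp (continuous_mdiag (m := m) (n := n))).tendsto 0).comp hz
  refine tendsto_iff_norm_sub_tendsto_zero.mpr (hmz.congr' ?_)
  filter_upwards [eventually_pos_fst_nhdsGT_prod (𝓝 ds)] with p hp
  rw [eq_sub_of_add_eq (hX p.1),
    ← frobenius_norm_orthogonal_mul_mul_transpose (hU p.1) (hV p.1)]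
  congr 1
  simp only [z, mdiag_sub, mdiag_smul, mdiag_add, Matrix.mul_sub, Matrix.sub_mul,
    Matrix.mul_add, Matrix.add_mul, Matrix.mul_smul, Matrix.smul_mul, smul_sub, smul_add,
    smul_smul, inv_mul_cancel₀ hp.ne', one_smul]
  abel

end Frobenius

end Paper

theorem stmt7_general {m n : ℕ} (hmn : n ≤ m) (f : (Fin n → ℝ) → EReal)
    (habs : AbsSymFun f) (X : Mat m n)
    (H : Mat m n) (ds : Fin n → ℝ)
    (hds : ∀ s, Tendsto (fun t : ℝ => (svals (X + t • H) s - svals X s) / t)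
      (𝓝[>] (0 : ℝ)) (𝓝 (ds s))) :
    subderiv (fun Z : Mat m n => f (svals Z)) X H = subderiv f (svals X) ds := by
  have hquot : Tendsto (fun t : ℝ => t⁻¹ • (svals (X + t • H) - svals X)) (𝓝[>] 0) (𝓝 ds) :=
    tendsto_pi_nhds.mpr fun s => by
      simpa only [Pi.smul_apply, Pi.sub_apply, smul_eq_mul, div_eq_inv_mul] using hds s
  choose U hU V hV hsvd using fun t : ℝ => exists_svd hmn (X + t • H)
  refine le_antisymm ?_ ?_
  · exact subderiv_le_of_forall_eq (fun p => U p.1 * mdiag (svals X + p.1 • p.2) * (V p.1)ᵀ)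
      (tendsto_inv_smul_conj_mdiag_sub hU hV hsvd hquot) rfl
      fun p => habs.apply_svals_orthogonal_mul_mdiag_mul hmn (hU p.1) (hV p.1) _
  · exact subderiv_le_of_forall_eq (fun p => svals (X + p.1 • p.2))
      (tendsto_inv_smul_svals_sub hquot) rfl fun _ => rfl

/-- Chain rule for subderivatives of orthogonally invariant matrix functions:
if `f` is lsc, convex and absolutely symmetric with `∂f(σ(X)) ≠ ∅`, then
`d(f∘σ)(X)(H) = df(σ(X))(σ'(X;H))`. -/
theorem stmt7 {m n : ℕ} (hmn : n ≤ m) (f : (Fin n → ℝ) → EReal)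
    (habs : AbsSymFun f) (hconv : ConvexEReal f) (hlsc : LowerSemicontinuous f)
    (hbot : ∀ x, f x ≠ ⊥) (X : Mat m n) (hfin : f (svals X) ≠ ⊤)
    (hsub : (convSubdiff vinner f (svals X)).Nonempty)
    (H : Mat m n) (ds : Fin n → ℝ)
    (hds : ∀ s, Tendsto (fun t : ℝ => (svals (X + t • H) s - svals X s) / t)
      (𝓝[>] (0 : ℝ)) (𝓝 (ds s))) :
    subderiv (fun Z : Mat m n => f (svals Z)) X H = subderiv f (svals X) ds :=
  stmt7_general hmn f habs X H ds hds
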